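/- In the orthographic construction with Ê equal to all of Ê(Δ, ê_0)∖{ê_0}: the biased graph Ω_0(Ê(Δ, ê_0)∖{ê_0}) is a biased expansion of Δ, with projection sending each edge ê to the edge of Δ whose edge line contains ê. -/

import Mathlib

open scoped Classical

/-! ## Graphs with parallel links and half edges -/

/-- A multigraph: each edge has a finite set of endpoints
(one endpoint for a half edge, two endpoints for a link). -/
structure MGraph (N : Type*) (E : Type*) where
  ends : E → Finset N

namespace MGraph

variable {N E : Type*} (G : MGraph N E)

/-- A link has two distinct endpoints. -/
def IsLink (e : E) : Prop := (G.ends e).card = 2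

/-- A half edge has exactly one endpoint. -/
def IsHalfEdge (e : E) : Prop := (G.ends e).card = 1

/-- The set of nodes of a set of edges. -/
def nodeSet (S : Set E) : Set N := {v | ∃ e ∈ S, v ∈ G.ends e}

/-- The nodes of a finite set of edges. -/
noncomputable def nodesOf (S : Finset E) : Finset N := S.biUnion G.ends

/-- The degree of a node in a finite edge set. -/
noncomputable def degreeIn (S : Finset E) (v : N) : ℕ :=
  (S.filter (fun e => v ∈ G.ends e)).card

/-- Two nodes joined by an edge of `S`. -/
def adjIn (S : Set E) (u v : N) : Prop := ∃ e ∈ S, u ∈ G.ends e ∧ v ∈ G.ends e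

/-- Connectivity of nodes through edges of `S`. -/
def nodeConn (S : Set E) : N → N → Prop := Relation.ReflTransGen (G.adjIn S)

/-- The components of the spanning subgraph `(N, S)`, as sets of nodes. -/
def components (S : Set E) : Set (Set N) := {W | ∃ v : N, W = {u | G.nodeConn S u v}}

/-- The number of components of the spanning subgraph `(N, S)`. -/
noncomputable def numComponents (S : Set E) : ℕ := Nat.card ↥(G.components S)

/-- The components of the non-spanning subgraph `(N(S), S)`. -/
def componentsOn (S : Set E) : Set (Set N) :=
  {W | ∃ v ∈ G.nodeSet S, W = {u | G.nodeConn S u v}}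

/-- The edges of `S` whose endpoints all lie in a node set `W`. -/
def edgesIn (S : Set E) (W : Set N) : Set E := {e | e ∈ S ∧ ∀ v ∈ G.ends e, v ∈ W}

/-- An edge set is connected if any two of its edges are joined through
consecutively intersecting edges of the set. -/
def ConnEdges (S : Set E) : Prop :=
  ∀ e ∈ S, ∀ f ∈ S, Relation.ReflTransGen
    (fun a b => a ∈ S ∧ b ∈ S ∧ ∃ v : N, v ∈ G.ends a ∧ v ∈ G.ends b) e f

/-- A circle: the edge set of a connected subgraph in which every node has degree 2. -/
def IsCircle (C : Finset E) : Prop :=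
  C.Nonempty ∧ (∀ e ∈ C, G.IsLink e) ∧ G.ConnEdges ↑C ∧
    ∀ v ∈ G.nodesOf C, G.degreeIn C v = 2

/-- A (simple, open) path joining two distinct nodes `u` and `v`. -/
def IsPath (Q : Finset E) (u v : N) : Prop :=
  Q.Nonempty ∧ u ≠ v ∧ (∀ e ∈ Q, G.IsLink e) ∧ G.ConnEdges ↑Q ∧
    u ∈ G.nodesOf Q ∧ v ∈ G.nodesOf Q ∧
    G.degreeIn Q u = 1 ∧ G.degreeIn Q v = 1 ∧
    ∀ w ∈ G.nodesOf Q, w ≠ u → w ≠ v → G.degreeIn Q w = 2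

/-- A simple graph: all edges are links and no two edges have the same endpoints. -/
def IsSimple : Prop := (∀ e : E, G.IsLink e) ∧ Function.Injective G.ends

/-- The graph is connected. -/
def IsConnected : Prop := ∀ u v : N, G.nodeConn Set.univ u v

/-- Inseparable graph: connected, and for every partition of the edge set into two
nonempty parts the two parts share at least two nodes. -/
def IsInseparable : Prop :=
  G.IsConnected ∧ ∀ A B : Set E, A.Nonempty → B.Nonempty → Disjoint A B →
    A ∪ B = Set.univ → ∃ u v : N, u ≠ v ∧ u ∈ G.nodeSet A ∧ u ∈ G.nodeSet B ∧
      v ∈ G.nodeSet A ∧ v ∈ G.nodeSet B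

/-- A linear class of circles: every member is a circle and no theta subgraph (the
union of three pairwise internally disjoint paths with the same two endpoints)
contains exactly two members of the class. -/
def IsLinearClass (B : Set (Finset E)) : Prop :=
  (∀ C ∈ B, G.IsCircle C) ∧
  ∀ u v : N, ∀ P₁ P₂ P₃ : Finset E,
    G.IsPath P₁ u v → G.IsPath P₂ u v → G.IsPath P₃ u v →
    Disjoint P₁ P₂ → Disjoint P₁ P₃ → Disjoint P₂ P₃ →
    (↑(G.nodesOf P₁) ∩ ↑(G.nodesOf P₂) : Set N) = {u, v} →
    (↑(G.nodesOf P₁) ∩ ↑(G.nodesOf P₃) : Set N) = {u, v} →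
    (↑(G.nodesOf P₂) ∩ ↑(G.nodesOf P₃) : Set N) = {u, v} →
    P₁ ∪ P₂ ∈ B → P₁ ∪ P₃ ∈ B → P₂ ∪ P₃ ∈ B

/-- A balanced edge set with respect to a class `B` of balanced circles:
no half edges, and every circle inside it belongs to `B`. -/
def IsBalancedSet (B : Set (Finset E)) (S : Set E) : Prop :=
  (∀ e ∈ S, G.IsLink e) ∧ ∀ C : Finset E, ↑C ⊆ S → G.IsCircle C → C ∈ B

/-- The number of balanced components of the spanning subgraph `(N, S)`. -/
noncomputable def numBalComponents (B : Set (Finset E)) (S : Set E) : ℕ :=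
  Nat.card ↥{W : Set N | W ∈ G.components S ∧ G.IsBalancedSet B (G.edgesIn S W)}

/-- Frame matroid rank function: `rk S = #N - b(S)`. -/
noncomputable def frameRk [Fintype N] (B : Set (Finset E)) (S : Set E) : ℕ :=
  Fintype.card N - G.numBalComponents B S

/-- Graphic (cycle) matroid rank function: `rk S = #N - c(S)`. -/
noncomputable def graphicRk [Fintype N] (S : Set E) : ℕ :=
  Fintype.card N - G.numComponents S

/-- Graphic matroid rank of a finite edge set, computed inside its own node set
(valid also for infinite graphs): `rk S = #N(S) - c(N(S), S)`. -/
noncomputable def graphicRkOn (S : Finset E) : ℕ :=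
  (G.nodesOf S).card - Nat.card ↥(G.componentsOn ↑S)

/-- Extended lift matroid rank function on `E ⊕ Unit`, where `Sum.inr ()` is the
extra point `e₀`: `rk S = #N - c(S ∩ E)` if `S ⊆ E` is balanced, and
`#N - c(S ∩ E) + 1` if `S` is unbalanced or contains `e₀`. -/
noncomputable def liftRk [Fintype N] (B : Set (Finset E)) (S : Set (E ⊕ Unit)) : ℕ :=
  if G.IsBalancedSet B {e | Sum.inl e ∈ S} ∧ Sum.inr () ∉ S then
    Fintype.card N - G.numComponents {e | Sum.inl e ∈ S}
  else Fintype.card N - G.numComponents {e | Sum.inl e ∈ S} + 1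

/-- Closed sets of the frame matroid (via the rank function; the matroid is finitary). -/
def FrameClosed [Fintype N] (B : Set (Finset E)) (S : Set E) : Prop :=
  ∀ e : E, (∃ S₀ : Finset E, ↑S₀ ⊆ S ∧
    G.frameRk B ↑(insert e S₀) = G.frameRk B ↑S₀) → e ∈ S

/-- Closed sets of the extended lift matroid. -/
def LiftClosed [Fintype N] (B : Set (Finset E)) (S : Set (E ⊕ Unit)) : Prop :=
  ∀ x : E ⊕ Unit, (∃ S₀ : Finset (E ⊕ Unit), ↑S₀ ⊆ S ∧
    G.liftRk B ↑(insert x S₀) = G.liftRk B ↑S₀) → x ∈ S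

/-- The balance-closure of an edge set. -/
def bcl (B : Set (Finset E)) (S : Set E) : Set E :=
  S ∪ {e | ∃ C ∈ B, e ∈ C ∧ ↑C ⊆ S ∪ {e}}

/-- The subgraph of all links, as a graph on the same nodes. -/
def linkGraph : MGraph N {e : E // G.IsLink e} := ⟨fun e => G.ends e.val⟩

/-- Restriction of a class of circles to the subgraph of links. -/
def linkBal (B : Set (Finset E)) : Set (Finset {e : E // G.IsLink e}) :=
  {C | C.image Subtype.val ∈ B}

/-- The subgraph on a subset of the edges (spanning all nodes). -/
def sub (D : Set E) : MGraph N ↥D := ⟨fun f => G.ends f.val⟩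

end MGraph

/-- A graph together with a distinguished class of "balanced" circles.
(It is a biased graph when the class is a linear class.) -/
structure BiasedGraph (N E : Type*) extends MGraph N E where
  Bal : Set (Finset E)

/-- The complete graph on a node set `N`. -/
def completeMGraph (N : Type*) : MGraph N {q : Finset N // q.card = 2} := ⟨Subtype.val⟩

/-- A gain graph with gain group `Γ`: each edge is given by a source, a target
(equal for a half edge) and a gain in the direction from source to target. -/
structure GainGraph (N E : Type*) (Γ : Type*) [Group Γ] extends MGraph N E where
  src : E → N
  tgt : E → N
  gain : E → Γ
  ends_eq : ∀ e : E, ends e = {src e, tgt e}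

namespace GainGraph

variable {N E Γ : Type*} [Group Γ] (Φ : GainGraph N E Γ)

/-- The gain of an edge in the direction from `u` to `v`. -/
noncomputable def ogain (e : E) (u v : N) : Γ :=
  if Φ.src e = u ∧ Φ.tgt e = v then Φ.gain e else (Φ.gain e)⁻¹

/-- A balanced circle of a gain graph: a circle whose gain function is given by a
potential on the nodes (equivalently, the product of its gains along a cyclic
orientation is the identity). -/
def BalancedCircle (C : Finset E) : Prop :=
  Φ.toMGraph.IsCircle C ∧
    ∃ θ : N → Γ, ∀ e ∈ C, Φ.gain e = (θ (Φ.src e))⁻¹ * θ (Φ.tgt e)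

/-- The biased graph `⟨Φ⟩` of a gain graph. -/
def biasedGraph : BiasedGraph N E := { Φ.toMGraph with Bal := {C | Φ.BalancedCircle C} }

end GainGraph

/-- A biased expansion of a graph `Δ` along a projection `p`: `p` is surjective,
preserves endpoints, and every circle of `Δ` with a chosen lift of all but one of
its edges has a unique completion to a balanced circle. -/
def IsBiasedExpansion {N E E' : Type*} (G : MGraph N E) (B : Set (Finset E))
    (Δ : MGraph N E') (p : E → E') : Prop :=
  Function.Surjective p ∧ (∀ e : E, G.ends e = Δ.ends (p e)) ∧
  ∀ C : Finset E', Δ.IsCircle C → ∀ e₀ ∈ C, ∀ s : E' → E,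
    (∀ f ∈ C.erase e₀, p (s f) = f) →
    ∃! t : E, p t = e₀ ∧ (C.erase e₀).image s ∪ {t} ∈ B

/-! ## Axiomatic (synthetic) projective geometry -/

/-- An axiomatic projective geometry: a point set with a line through any two
points, unique when the points are distinct, every line having at least three
points, and satisfying the Veblen–Young axiom. -/
structure ProjGeom (P : Type*) where
  line : P → P → Set P
  line_self : ∀ p : P, line p p = {p}
  line_symm : ∀ p q : P, line p q = line q p
  left_mem_line : ∀ p q : P, p ∈ line p q
  right_mem_line : ∀ p q : P, q ∈ line p q
  line_unique : ∀ p q x y : P, p ≠ q → x ∈ line p q → y ∈ line p q → x ≠ y →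
    line x y = line p q
  exists_third : ∀ p q : P, p ≠ q → ∃ r ∈ line p q, r ≠ p ∧ r ≠ q
  veblen : ∀ p q r s x : P, p ≠ q → r ≠ s → p ≠ r → q ≠ s →
    x ∈ line p q → x ∈ line r s → ∃ y, y ∈ line p r ∧ y ∈ line q s

namespace ProjGeom

variable {P : Type*} (G : ProjGeom P)

/-- A flat (subspace): a line-closed set of points. -/
def IsFlat (t : Set P) : Prop := ∀ p ∈ t, ∀ q ∈ t, G.line p q ⊆ t

/-- The span of a point set: the smallest flat containing it. -/
def span (A : Set P) : Set P := ⋂₀ {t : Set P | G.IsFlat t ∧ A ⊆ t}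

/-- An independent point set: no point is in the span of the others. -/
def Indep (A : Set P) : Prop := ∀ a ∈ A, a ∉ G.span (A \ {a})

/-- The (matroid) rank of a point set: the largest cardinality of a finite
independent subset. -/
noncomputable def rank (A : Set P) : ℕ :=
  sSup {n : ℕ | ∃ B : Finset P, ↑B ⊆ A ∧ G.Indep ↑B ∧ B.card = n}

/-- A hyperplane: a maximal proper flat. -/
def IsHyperplane (h : Set P) : Prop :=
  G.IsFlat h ∧ h ≠ Set.univ ∧ ∀ t : Set P, G.IsFlat t → h ⊆ t → t = h ∨ t = Set.univ

/-- The codimension of a flat: the least number of hyperplanes intersecting in it. -/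
noncomputable def codim (t : Set P) : ℕ :=
  sInf {n : ℕ | ∃ H : Finset (Set P), H.card = n ∧ (∀ h ∈ H, G.IsHyperplane h) ∧
    ⋂₀ ↑H = t}

variable {N : Type*}

/-- A cross-flat with respect to an independent family `ν`: a flat containing
none of the points `ν v`. -/
def crossFlat (ν : N → P) (t : Set P) : Prop := G.IsFlat t ∧ ∀ v : N, ν v ∉ t

/-- The union of all edge lines of the independent family `ν`. -/
def edgeLineUnion (ν : N → P) : Set P :=
  ⋃ (v : N) (w : N) (_ : v ≠ w), G.line (ν v) (ν w)

/-! ### The Menelaean (point) construction for the frame matroid -/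

/-- The underlying graph of the Menelaean construction `Ω(N̂, Ehat)`: a point of `Ehat`
in `N̂` is a half edge, any other point is a link joining the ends of its edge line. -/
noncomputable def menGraph (ν : N → P) (Ehat : Set P)
    (hE : ∀ x ∈ Ehat, x ∉ Set.range ν →
      ∃ pr : N × N, pr.1 ≠ pr.2 ∧ x ∈ G.line (ν pr.1) (ν pr.2)) :
    MGraph N ↥Ehat where
  ends e :=
    if h : (e : P) ∈ Set.range ν then {(show ∃ v : N, ν v = ↑e from h).choose}
    else {(hE e e.2 h).choose.1, (hE e e.2 h).choose.2}

/-- The balanced circles of the Menelaean construction: circles whose point set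
lies in a cross-flat. -/
noncomputable def menBal (ν : N → P) (Ehat : Set P)
    (hE : ∀ x ∈ Ehat, x ∉ Set.range ν →
      ∃ pr : N × N, pr.1 ≠ pr.2 ∧ x ∈ G.line (ν pr.1) (ν pr.2)) :
    Set (Finset ↥Ehat) :=
  {C | (G.menGraph ν Ehat hE).IsCircle C ∧
    ∃ t : Set P, G.crossFlat ν t ∧ ∀ e ∈ C, (e : P) ∈ t}

/-! ### The Cevian (hyperplane) construction for the frame matroid -/

/-- A Cevian arrangement over the point basis `ν`, described by its associated
graph `Γ` and its apex function: a link `e` with endpoints `v, w` has its apex on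
the edge line `v̂ŵ`, off the basis; a half edge at `v` has apex `ν v`. -/
def IsCevian {E : Type*} (ν : N → P) (Γ : MGraph N E) (apex : E → P) : Prop :=
  ∀ e : E,
    (∃ v w : N, v ≠ w ∧ Γ.ends e = ({v, w} : Finset N) ∧
      apex e ∈ G.line (ν v) (ν w) ∧ apex e ∉ Set.range ν) ∨
    (∃ v : N, Γ.ends e = ({v} : Finset N) ∧ apex e = ν v)

/-- The apical hyperplane of an edge of a Cevian arrangement. -/
def cevHyp {E : Type*} (ν : N → P) (Γ : MGraph N E) (apex : E → P) (e : E) : Set P :=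
  if Γ.IsLink e then G.span ((ν '' {u : N | u ∉ Γ.ends e}) ∪ {apex e})
  else G.span (ν '' {u : N | u ∉ Γ.ends e})

/-- The rank function of a Cevian arrangement:
the codimension of the intersection of the corresponding apical hyperplanes. -/
noncomputable def cevRk {E : Type*} (ν : N → P) (Γ : MGraph N E) (apex : E → P)
    (S : Finset E) : ℕ :=
  G.codim (⋂ e ∈ S, G.cevHyp ν Γ apex e)

/-- The balanced circles of a Cevian arrangement:
circles of deficient hyperplane-intersection rank. -/
noncomputable def cevBal {E : Type*} (ν : N → P) (Γ : MGraph N E) (apex : E → P) :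
    Set (Finset E) :=
  {C | Γ.IsCircle C ∧ G.cevRk ν Γ apex C < C.card}

/-! ### The orthographic (point) construction for the lift matroid -/

/-- The projection of the orthographic construction: each point of `Ehat` lies on the
edge line `z'(f)e₀` of a unique edge `f` of `Δ`. -/
noncomputable def orthoProj {E' : Type*} (z' : E' → P) (e₀ : P) (Ehat : Set P)
    (hE : ∀ x ∈ Ehat, ∃ f : E', x ∈ G.line (z' f) e₀) : ↥Ehat → E' :=
  fun e => (hE e e.2).choose

/-- The underlying graph of the orthographic construction `Ω₀(Ehat)`. -/
noncomputable def orthoGraph {E' : Type*} (Δ : MGraph N E') (z' : E' → P) (e₀ : P)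
    (Ehat : Set P) (hE : ∀ x ∈ Ehat, ∃ f : E', x ∈ G.line (z' f) e₀) : MGraph N ↥Ehat :=
  ⟨fun e => Δ.ends (G.orthoProj z' e₀ Ehat hE e)⟩

/-- The balanced circles of the orthographic construction:
circles spanning a cross-flat (a flat not containing `e₀`). -/
noncomputable def orthoBal {E' : Type*} (Δ : MGraph N E') (z' : E' → P) (e₀ : P)
    (Ehat : Set P) (hE : ∀ x ∈ Ehat, ∃ f : E', x ∈ G.line (z' f) e₀) : Set (Finset ↥Ehat) :=
  {C | (G.orthoGraph Δ z' e₀ Ehat hE).IsCircle C ∧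
    e₀ ∉ G.span (Subtype.val '' (↑C : Set ↥Ehat))}

end ProjGeom

/-! ### Synthetic affinographic arrangements -/

/-- A synthetic affinographic arrangement of hyperplanes in the affine geometry
obtained from the projective geometry `G` by deleting the ideal hyperplane `hinf`:
a family of hyperplanes `hP e` (given by their projective completions, with affine
parts `hP e \ hinf`), with parallel classes indexed by the edges of a graph `Δ` with
links only via the surjection `π`; hyperplanes in the class of `f` have common
ideal part `ideal f`, and the matroid of the ideal parts (rank = codimension inside
`hinf`) is the graphic matroid of `Δ`. -/
def IsAffinographic {P N E E' : Type*} [Fintype N] (G : ProjGeom P) (hinf : Set P)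
    (hP : E → Set P) (Δ : MGraph N E') (π : E → E') (ideal : E' → Set P) : Prop :=
  G.IsHyperplane hinf ∧ (∀ f : E', Δ.IsLink f) ∧ Function.Surjective π ∧
  Function.Injective hP ∧ Function.Injective ideal ∧
  (∀ e : E, G.IsHyperplane (hP e) ∧ hP e ≠ hinf ∧ hP e ∩ hinf = ideal (π e)) ∧
  ∀ S : Finset E', Δ.graphicRk (↑S : Set E') = G.codim (hinf ∩ ⋂ f ∈ S, ideal f) - 1

/-- The underlying graph of the biased graph `Ω(A)` of an affinographic
arrangement: each edge of `Δ` is replaced by the edges of its parallel class. -/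
def affinoGraph {N E E' : Type*} (Δ : MGraph N E') (π : E → E') : MGraph N E :=
  ⟨fun e => Δ.ends (π e)⟩

/-- The affine intersection `t_A(S)` of the hyperplanes of `S`. -/
def affInter {P E : Type*} (hinf : Set P) (hP : E → Set P) (S : Set E) : Set P :=
  ⋂ e ∈ S, (hP e \ hinf)

/-- The balanced circles of `Ω(A)`: digons over a single edge of `Δ` are unbalanced;
any other circle is balanced iff its affine intersection is nonempty. -/
def affinoBal {P N E E' : Type*} (_G : ProjGeom P) (hinf : Set P) (hP : E → Set P)
    (Δ : MGraph N E') (π : E → E') : Set (Finset E) :=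
  {C | (affinoGraph Δ π).IsCircle C ∧ ¬(∃ f : E', ∀ e ∈ C, π e = f) ∧
    (affInter hinf hP ↑C).Nonempty}

/-! ### Coordinatized projective spaces -/

/-- The rank of a finite set of points of a coordinatized projective space:
the dimension of the linear span of representative vectors. -/
noncomputable def projRank (F : Type*) {V : Type*} [DivisionRing F] [AddCommGroup V]
    [Module F V] (A : Finset (Projectivization F V)) : ℕ :=
  Module.finrank F ↥(Submodule.span F (Projectivization.rep '' (↑A : Set (Projectivization F V))))

/-- The edge set of the full biased graph `Ω^•`: the edges of `Ω` together with a
new half edge at every node not already supporting one. -/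
def FullE {N E : Type*} (Ω : BiasedGraph N E) : Type _ :=
  E ⊕ {v : N // ∀ e : E, Ω.ends e ≠ ({v} : Finset N)}

/-- The underlying graph of the full biased graph `Ω^•`. -/
def fullGraph {N E : Type*} (Ω : BiasedGraph N E) : MGraph N (FullE Ω) :=
  ⟨Sum.elim Ω.ends (fun v => {v.val})⟩

/-- The balanced circles of the full biased graph `Ω^•` (circles avoid half edges). -/
def fullBal {N E : Type*} (Ω : BiasedGraph N E) : Set (Finset (FullE Ω)) :=
  {C | ∃ C₀ ∈ Ω.Bal, C = C₀.image Sum.inl}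

/-!
A circle `C` of `Δ` is carried by `z'` to a circuit of `P'`: for `f₀ ∈ C`, the points
`z'(C - f₀)` are independent and span `z'(f₀)`. As `ê₀ ∉ P'`, the point `ê₀` together
with `z'(C - f₀)` is still independent, and sliding every `z'(f)` along its edge line to
an arbitrary lift `s(f) ≠ ê₀` keeps it independent with the same span. So `X = s(C - f₀)`
spans a cross-flat, and `z'(f₀)` lies in the span of `ê₀` and `X`, which is the cone
from `ê₀` over `span X`. Hence the edge line of `f₀` meets `span X` in exactly one
point, and this point is the only lift of `f₀` completing `X` to a balanced circle.
-/

namespace MGraph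

variable {N E : Type*} (G : MGraph N E)

lemma mem_nodesOf {C : Finset E} {v : N} : v ∈ G.nodesOf C ↔ ∃ e ∈ C, v ∈ G.ends e := by
  simp [nodesOf]

lemma nodeConn_coe_iff_of_connEdges {C : Finset E} (hC : G.ConnEdges ↑C) (u v : N) :
    G.nodeConn ↑C u v ↔ u = v ∨ (u ∈ G.nodesOf C ∧ v ∈ G.nodesOf C) := by
  constructor
  · intro h
    induction h with
    | refl => exact Or.inl rfl
    | tail _ hstep ih =>
      obtain ⟨e, he, hb, hc⟩ := hstep
      refine Or.inr ⟨?_, G.mem_nodesOf.mpr ⟨e, he, hc⟩⟩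
      rcases ih with rfl | ⟨hu, -⟩
      exacts [G.mem_nodesOf.mpr ⟨e, he, hb⟩, hu]
  · rintro (rfl | ⟨hu, hv⟩)
    · exact Relation.ReflTransGen.refl
    obtain ⟨e, he, hue⟩ := G.mem_nodesOf.mp hu
    obtain ⟨g, hg, hvg⟩ := G.mem_nodesOf.mp hv
    have key : ∀ g, Relation.ReflTransGen
        (fun a b => a ∈ (↑C : Set E) ∧ b ∈ (↑C : Set E) ∧ ∃ w, w ∈ G.ends a ∧ w ∈ G.ends b)
        e g → ∀ v ∈ G.ends g, G.nodeConn ↑C u v := by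
      intro g hchain
      induction hchain with
      | refl => exact fun v hv => Relation.ReflTransGen.single ⟨e, he, hue, hv⟩
      | tail _ hstep ih =>
        obtain ⟨-, hc, w, hwb, hwc⟩ := hstep
        exact fun v hv => (ih w hwb).tail ⟨_, hc, hwc, hv⟩
    exact key g (hC e he g hg) v hvg

lemma numComponents_eq_of_nodeConn_iff [Fintype N] (S : Set E) {M : Finset N}
    (hM : M.Nonempty) (hconn : ∀ u v, G.nodeConn S u v ↔ u = v ∨ (u ∈ M ∧ v ∈ M)) :
    G.numComponents S = Fintype.card N - M.card + 1 := by
  have hclass : ∀ v, {u | G.nodeConn S u v} = if v ∈ M then (↑M : Set N) else {v} := by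
    intro v
    ext u
    split_ifs with hv <;> simp [hconn, hv]
    rintro rfl
    exact hv
  have hcomp : G.components S =
      insert (↑M : Set N) ((fun v => ({v} : Set N)) '' ↑Mᶜ) := by
    ext W
    simp only [components, hclass, Set.mem_ofPred_eq, Set.mem_insert_iff, Set.mem_image,
      Finset.coe_compl, Set.mem_compl_iff, Finset.mem_coe]
    constructor
    · rintro ⟨v, rfl⟩
      split_ifs with hv
      exacts [Or.inl rfl, Or.inr ⟨v, hv, rfl⟩]
    · rintro (rfl | ⟨v, hv, rfl⟩)
      · obtain ⟨m, hm⟩ := hM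
        exact ⟨m, (if_pos hm).symm⟩
      · exact ⟨v, (if_neg hv).symm⟩
  have hM' : (↑M : Set N) ∉ (fun v => ({v} : Set N)) '' ↑Mᶜ := by
    rintro ⟨v, hv, hvM⟩
    exact Finset.mem_compl.mp hv (Finset.mem_coe.mp (hvM ▸ rfl : v ∈ (↑M : Set N)))
  rw [numComponents, hcomp, Nat.card_coe_set_eq, Set.ncard_insert_of_notMem hM',
    Set.ncard_image_of_injective _ Set.singleton_injective, Set.ncard_coe_finset,
    Finset.card_compl]

lemma sum_degreeIn_eq_sum_card (C : Finset E) (V : Finset N) :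
    ∑ v ∈ V, G.degreeIn C v = ∑ e ∈ C, (V.filter (· ∈ G.ends e)).card :=
  (Finset.sum_card_bipartiteAbove_eq_sum_card_bipartiteBelow _).symm

lemma card_nodesOf_of_isCircle {C : Finset E} (hC : G.IsCircle C) :
    (G.nodesOf C).card = C.card := by
  have hends : ∀ e ∈ C, ((G.nodesOf C).filter (· ∈ G.ends e)).card = 2 := fun e he => by
    rw [Finset.filter_mem_eq_inter, Finset.inter_eq_right.mpr
      fun v hv => G.mem_nodesOf.mpr ⟨e, he, hv⟩]
    exact hC.2.1 e he
  have hcount := G.sum_degreeIn_eq_sum_card C (G.nodesOf C)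
  rw [Finset.sum_congr rfl hC.2.2.2, Finset.sum_congr rfl hends, Finset.sum_const,
    Finset.sum_const, smul_eq_mul, smul_eq_mul] at hcount
  omega

/-- Otherwise the component `V` of `a` would have an odd number of incidences with the
edges of the circle (only `f₀` leaves `V`, and it does so once), although every node
of `V` has degree 2. -/
lemma nodeConn_erase_of_mem_ends {C : Finset E} (hC : G.IsCircle C) {f₀ : E} (hf₀ : f₀ ∈ C)
    {a b : N} (ha : a ∈ G.ends f₀) (hb : b ∈ G.ends f₀) :
    G.nodeConn ↑(C.erase f₀) a b := by
  by_contra hab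
  have hne : a ≠ b := fun h => hab (h ▸ Relation.ReflTransGen.refl)
  set V := (G.nodesOf C).filter (G.nodeConn ↑(C.erase f₀) a)
  have heven : ∀ e ∈ C.erase f₀, Even (V.filter (· ∈ G.ends e)).card := by
    intro e he
    by_cases hex : ∃ x ∈ G.ends e, x ∈ V
    · obtain ⟨x, hxe, hxV⟩ := hex
      have hsub : G.ends e ⊆ V := fun y hye => Finset.mem_filter.mpr
        ⟨G.mem_nodesOf.mpr ⟨e, Finset.mem_of_mem_erase he, hye⟩,
          (Finset.mem_filter.mp hxV).2.tail ⟨e, he, hxe, hye⟩⟩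
      rw [Finset.filter_mem_eq_inter, Finset.inter_eq_right.mpr hsub,
        hC.2.1 e (Finset.mem_of_mem_erase he)]
      exact even_two
    · push Not at hex
      rw [Finset.filter_false_of_mem fun x hxV hxe => hex x hxe hxV]
      exact Even.zero
  have hends : G.ends f₀ = {a, b} :=
    (Finset.eq_of_subset_of_card_le (Finset.insert_subset ha (Finset.singleton_subset_iff.mpr hb))
      (by rw [hC.2.1 f₀ hf₀, Finset.card_pair hne])).symm
  have hone : (V.filter (· ∈ G.ends f₀)).card = 1 := by
    rw [Finset.card_eq_one]
    refine ⟨a, Finset.eq_singleton_iff_unique_mem.mpr ⟨?_, fun x hx => ?_⟩⟩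
    · exact Finset.mem_filter.mpr ⟨Finset.mem_filter.mpr
        ⟨G.mem_nodesOf.mpr ⟨f₀, hf₀, ha⟩, Relation.ReflTransGen.refl⟩, ha⟩
    · obtain ⟨hxV, hx⟩ := Finset.mem_filter.mp hx
      rw [hends, Finset.mem_insert, Finset.mem_singleton] at hx
      exact hx.resolve_right fun hxb => hab (hxb ▸ (Finset.mem_filter.mp hxV).2)
  have hcount := G.sum_degreeIn_eq_sum_card C V
  rw [Finset.sum_congr rfl fun v hv => hC.2.2.2 v (Finset.mem_filter.mp hv).1,
    ← Finset.add_sum_erase C _ hf₀, hone] at hcount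
  obtain ⟨k, hk⟩ := Finset.even_sum _ heven
  simp only [Finset.sum_const, smul_eq_mul] at hcount
  omega

lemma nodeConn_erase_of_isCircle {C : Finset E} (hC : G.IsCircle C) {f₀ : E} (hf₀ : f₀ ∈ C) :
    G.nodeConn ↑(C.erase f₀) = G.nodeConn ↑C := by
  ext u v
  constructor
  · exact Relation.ReflTransGen.mono
      (fun x y ⟨e, he, hx, hy⟩ => ⟨e, Finset.mem_of_mem_erase he, hx, hy⟩) u v
  · intro h
    induction h with
    | refl => exact Relation.ReflTransGen.refl
    | tail _ hstep ih =>
      obtain ⟨e, he, hb, hc⟩ := hstep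
      by_cases hef : e = f₀
      · subst hef
        exact ih.trans (G.nodeConn_erase_of_mem_ends hC he hb hc)
      · exact ih.tail ⟨e, Finset.mem_erase.mpr ⟨hef, he⟩, hb, hc⟩

lemma graphicRk_of_isCircle [Fintype N] {C : Finset E} (hC : G.IsCircle C) :
    G.graphicRk ↑C = C.card - 1 := by
  have hcard := G.card_nodesOf_of_isCircle hC
  have hM : (G.nodesOf C).Nonempty := Finset.card_pos.mp (hcard ▸ hC.1.card_pos)
  have hle := Finset.card_le_univ (G.nodesOf C)
  rw [graphicRk, G.numComponents_eq_of_nodeConn_iff _ hM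
    (G.nodeConn_coe_iff_of_connEdges hC.2.2.1)]
  omega

lemma graphicRk_erase_of_isCircle [Fintype N] {C : Finset E} (hC : G.IsCircle C) {f₀ : E}
    (hf₀ : f₀ ∈ C) : G.graphicRk ↑(C.erase f₀) = G.graphicRk ↑C := by
  unfold graphicRk numComponents components
  rw [G.nodeConn_erase_of_isCircle hC hf₀]

lemma isCircle_image {E₂ : Type*} {G₂ : MGraph N E₂} {σ : E → E₂} {C : Finset E}
    (hinj : Set.InjOn σ ↑C) (hends : ∀ e ∈ C, G₂.ends (σ e) = G.ends e) (hC : G.IsCircle C) :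
    G₂.IsCircle (C.image σ) := by
  obtain ⟨hne, hlink, hconn, hdeg⟩ := hC
  have hnodes : G₂.nodesOf (C.image σ) = G.nodesOf C := by
    ext v
    simp only [G₂.mem_nodesOf, G.mem_nodesOf, Finset.mem_image]
    constructor
    · rintro ⟨_, ⟨e, he, rfl⟩, hv⟩
      exact ⟨e, he, hends e he ▸ hv⟩
    · rintro ⟨e, he, hv⟩
      exact ⟨σ e, ⟨e, he, rfl⟩, (hends e he).symm ▸ hv⟩
  have hdegree : ∀ v, G₂.degreeIn (C.image σ) v = G.degreeIn C v := by
    intro v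
    rw [degreeIn, Finset.filter_image, Finset.card_image_of_injOn
      (hinj.mono fun e he => (Finset.mem_filter.mp he).1), degreeIn]
    exact congrArg Finset.card (Finset.filter_congr fun e he => by rw [hends e he])
  refine ⟨hne.image σ, ?_, ?_, fun v hv => hdegree v ▸ hdeg v (hnodes ▸ hv)⟩
  · simp only [Finset.mem_image, forall_exists_index, and_imp, forall_apply_eq_imp_iff₂]
    intro e he
    rw [IsLink, hends e he]
    exact hlink e he
  · intro _ ha' _ hb'
    obtain ⟨a, ha, rfl⟩ := Finset.mem_image.mp (Finset.mem_coe.mp ha')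
    obtain ⟨b, hb, rfl⟩ := Finset.mem_image.mp (Finset.mem_coe.mp hb')
    refine Relation.ReflTransGen.lift σ ?_ a b (hconn a ha b hb)
    rintro x y ⟨hx, hy, w, hwx, hwy⟩
    exact ⟨Finset.mem_image_of_mem σ hx, Finset.mem_image_of_mem σ hy, w,
      (hends x hx).symm ▸ hwx, (hends y hy).symm ▸ hwy⟩

lemma isCircle_image_erase_union {E₂ : Type*} {G₂ : MGraph N E₂} {p : E₂ → E}
    (hp : ∀ e, G₂.ends e = G.ends (p e)) {C : Finset E} (hC : G.IsCircle C) {f₀ : E}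
    (hf₀ : f₀ ∈ C) {s : E → E₂} (hs : ∀ f ∈ C.erase f₀, p (s f) = f) {t : E₂}
    (ht : p t = f₀) : G₂.IsCircle ((C.erase f₀).image s ∪ {t}) := by
  have hσ : ∀ f ∈ C, p (Function.update s f₀ t f) = f := by
    intro f hf
    by_cases hff : f = f₀
    · rw [hff, Function.update_self, ht]
    · rw [Function.update_of_ne hff, hs f (Finset.mem_erase.mpr ⟨hff, hf⟩)]
  have himage : (C.erase f₀).image s ∪ {t} = C.image (Function.update s f₀ t) := by
    calc (C.erase f₀).image s ∪ {t}
        = insert (Function.update s f₀ t f₀) ((C.erase f₀).image (Function.update s f₀ t)) := by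
          rw [Finset.union_singleton, Function.update_self, Finset.image_congr fun f hf =>
            Function.update_of_ne (Finset.ne_of_mem_erase hf) t s]
      _ = C.image (Function.update s f₀ t) := by
          rw [← Finset.image_insert, Finset.insert_erase hf₀]
  rw [himage]
  refine G.isCircle_image (fun x hx y hy hxy => ?_) (fun e he => by rw [hp, hσ e he]) hC
  rw [← hσ x hx, ← hσ y hy, hxy]

end MGraph

namespace ProjGeom

variable {P : Type*} (G : ProjGeom P)

lemma left_mem_line_of_mem {p q x : P} (hx : x ∈ G.line p q) (hxq : x ≠ q) :
    p ∈ G.line x q := by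
  by_cases hpq : p = q
  · rw [hpq, G.line_self] at hx
    exact absurd hx hxq
  · rw [G.line_unique p q x q hpq hx (G.right_mem_line p q) hxq]
    exact G.left_mem_line p q

lemma isFlat_span (A : Set P) : G.IsFlat (G.span A) := fun p hp q hq _ hx =>
  Set.mem_sInter.mpr fun t ht =>
    ht.1 p (Set.mem_sInter.mp hp t ht) q (Set.mem_sInter.mp hq t ht) hx

lemma subset_span (A : Set P) : A ⊆ G.span A :=
  fun _ ha => Set.mem_sInter.mpr fun _ ht => ht.2 ha

lemma span_le {A t : Set P} (ht : G.IsFlat t) (h : A ⊆ t) : G.span A ⊆ t :=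
  Set.sInter_subset_of_mem ⟨ht, h⟩

lemma span_mono {A B : Set P} (h : A ⊆ B) : G.span A ⊆ G.span B :=
  G.span_le (G.isFlat_span B) (h.trans (G.subset_span B))

lemma line_subset_span {A : Set P} {a b : P} (ha : a ∈ G.span A) (hb : b ∈ G.span A) :
    G.line a b ⊆ G.span A :=
  G.isFlat_span A a ha b hb

lemma mem_span_insert_self (A : Set P) (a : P) : a ∈ G.span (insert a A) :=
  G.subset_span _ (Set.mem_insert a A)

lemma span_insert_eq_of_mem {A : Set P} {a : P} (ha : a ∈ G.span A) :
    G.span (insert a A) = G.span A :=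
  (G.span_le (G.isFlat_span A) (Set.insert_subset ha (G.subset_span A))).antisymm
    (G.span_mono (Set.subset_insert a A))

lemma mem_span_of_mem_line {S : Set P} {x y e : P} (hx : x ∈ G.line y e) (hxe : x ≠ e)
    (hxS : x ∈ G.span S) (heS : e ∈ G.span S) : y ∈ G.span S :=
  G.line_subset_span hxS heS (G.left_mem_line_of_mem hx hxe)

lemma eq_of_mem_line_of_mem_line {F : Set P} (hF : G.IsFlat F) {e p q x : P} (he : e ∉ F)
    (hp : p ∈ F) (hq : q ∈ F) (hxe : x ≠ e) (hxp : x ∈ G.line p e) (hxq : x ∈ G.line q e) :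
    p = q := by
  by_contra hpq
  have hpe : p ≠ e := fun h => he (h ▸ hp)
  have hq' : q ∈ G.line p e := by
    rw [← G.line_unique p e x e hpe hxp (G.right_mem_line p e) hxe]
    exact G.left_mem_line_of_mem hxq hxe
  have hline : G.line p q = G.line p e :=
    G.line_unique p e p q hpe (G.left_mem_line p e) hq' hpq
  exact he (hF p hp q hq (hline ▸ G.right_mem_line p e))

def cone (F : Set P) (q : P) : Set P := insert q {x | ∃ a ∈ F, x ∈ G.line a q}

lemma cone_mono {F F' : Set P} (h : F ⊆ F') (q : P) : G.cone F q ⊆ G.cone F' q :=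
  Set.insert_subset_insert fun _ ⟨a, ha, hx⟩ => ⟨a, h ha, hx⟩

lemma mem_cone_of_mem_line {F : Set P} {a q x : P} (ha : a ∈ F) (hx : x ∈ G.line a q) :
    x ∈ G.cone F q :=
  Set.mem_insert_of_mem q ⟨a, ha, hx⟩

/-- Veblen–Young, applied twice: first to the lines `zy` and `qa` meeting in `x`, which
gives a point `w` on `zq` and `ya`; then to `wa` and `qb` meeting in `y`, which gives
the point `u` of `ab` on `zq`. -/
lemma mem_cone_line_of_mem_line {a b q x y z : P} (hq : q ∉ G.line a b)
    (hx : x ∈ G.line a q) (hy : y ∈ G.line b q) (hz : z ∈ G.line x y) :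
    z ∈ G.cone (G.line a b) q := by
  have haq : a ≠ q := fun h => hq (h ▸ G.left_mem_line a b)
  have hbq : b ≠ q := fun h => hq (h ▸ G.right_mem_line a b)
  have ha : a ∈ G.line a b := G.left_mem_line a b
  by_cases hxy : x = y
  · rw [hxy, G.line_self, Set.mem_singleton_iff] at hz
    rw [hz, ← hxy]
    exact G.mem_cone_of_mem_line ha hx
  by_cases hyq : y = q
  · subst hyq
    rw [G.line_unique a y x y haq hx (G.right_mem_line a y) hxy] at hz
    exact G.mem_cone_of_mem_line ha hz
  by_cases hya : y = a
  · subst hya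
    rw [G.line_unique y q x y haq hx (G.left_mem_line y q) hxy] at hz
    exact G.mem_cone_of_mem_line ha hz
  by_cases hab : a = b
  · subst hab
    rw [G.line_unique a q x y haq hx hy hxy] at hz
    exact G.mem_cone_of_mem_line ha hz
  by_cases hzq : z = q
  · rw [hzq]
    exact Set.mem_insert q _
  by_cases hzy : z = y
  · exact G.mem_cone_of_mem_line (G.right_mem_line a b) (hzy ▸ hy)
  have hxzy : x ∈ G.line z y := by
    rw [G.line_unique x y z y hxy hz (G.right_mem_line x y) hzy]
    exact G.left_mem_line x y
  have hxqa : x ∈ G.line q a := G.line_symm a q ▸ hx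
  obtain ⟨w, hwzq, hwya⟩ := G.veblen z y q a x hzy haq.symm hzq hya hxzy hxqa
  have hwq : w ≠ q := by
    intro hwq
    rw [hwq] at hwya
    have hy' : y ∈ G.line q a := G.left_mem_line_of_mem hwya haq.symm
    have hb : b ∈ G.line q a := by
      rw [← G.line_unique q a y q haq.symm hy' (G.left_mem_line q a) hyq]
      exact G.left_mem_line_of_mem hy hyq
    exact hq (G.line_unique q a a b haq.symm (G.right_mem_line q a) hb hab ▸
      G.left_mem_line q a)
  by_cases hwa : w = a
  · subst hwa
    exact G.mem_cone_of_mem_line ha (G.left_mem_line_of_mem hwzq hwq)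
  have hywa : y ∈ G.line w a := by
    rw [G.line_unique y a w a hya hwya (G.right_mem_line y a) hwa]
    exact G.left_mem_line y a
  have hyqb : y ∈ G.line q b := G.line_symm b q ▸ hy
  obtain ⟨u, huwq, huab⟩ := G.veblen w a q b y hwa hbq.symm hwq hab hywa hyqb
  have huq : u ≠ q := fun h => hq (h ▸ huab)
  have hline : G.line u q = G.line z q :=
    G.line_unique z q u q hzq
      (G.line_unique z q w q hzq hwzq (G.right_mem_line z q) hwq ▸ huwq)
      (G.right_mem_line z q) huq
  exact G.mem_cone_of_mem_line huab (hline ▸ G.left_mem_line z q)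

lemma isFlat_cone {F : Set P} (hF : G.IsFlat F) {q : P} (hq : q ∉ F) :
    G.IsFlat (G.cone F q) := by
  intro x hx y hy z hz
  rcases F.eq_empty_or_nonempty with rfl | ⟨c, hc⟩
  · have hcone : ∀ x ∈ G.cone ∅ q, x = q := by
      rintro x (rfl | ⟨a, ha, -⟩)
      exacts [rfl, absurd ha (Set.notMem_empty a)]
    rw [hcone x hx, hcone y hy, G.line_self, Set.mem_singleton_iff] at hz
    rw [hz]
    exact Set.mem_insert q _
  have hline : ∀ x ∈ G.cone F q, ∃ a ∈ F, x ∈ G.line a q := by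
    rintro x (rfl | hx)
    exacts [⟨c, hc, G.right_mem_line c x⟩, hx]
  obtain ⟨a, ha, hxa⟩ := hline x hx
  obtain ⟨b, hb, hyb⟩ := hline y hy
  exact G.cone_mono (hF a ha b hb) q
    (G.mem_cone_line_of_mem_line (fun h => hq (hF a ha b hb h)) hxa hyb hz)

lemma span_insert_eq_cone {A : Set P} {q : P} (hq : q ∉ G.span A) :
    G.span (insert q A) = G.cone (G.span A) q := by
  refine (G.span_le (G.isFlat_cone (G.isFlat_span A) hq) ?_).antisymm ?_
  · exact Set.insert_subset_insert fun x hx =>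
      ⟨x, G.subset_span A hx, G.left_mem_line x q⟩
  · rintro x (rfl | ⟨a, ha, hx⟩)
    · exact G.mem_span_insert_self A x
    · exact G.line_subset_span (G.span_mono (Set.subset_insert q A) ha)
        (G.mem_span_insert_self A q) hx

lemma mem_span_insert_exchange {A : Set P} {p q : P} (hq : q ∉ G.span A)
    (hp : p ∈ G.span (insert q A)) (hpA : p ∉ G.span A) :
    q ∈ G.span (insert p A) := by
  rw [G.span_insert_eq_cone hq] at hp
  rcases hp with rfl | ⟨a, ha, hpa⟩
  · exact G.mem_span_insert_self A p
  · exact G.mem_span_of_mem_line (G.line_symm a q ▸ hpa) (fun (h : p = a) => hpA (h ▸ ha))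
      (G.mem_span_insert_self A p) (G.span_mono (Set.subset_insert p A) ha)

section Indep

variable {G}

lemma Indep.mono {A B : Set P} (hA : G.Indep A) (h : B ⊆ A) : G.Indep B :=
  fun a ha hsp => hA a (h ha) (G.span_mono (Set.sdiff_subset_sdiff_left h) hsp)

lemma Indep.notMem_span {A : Set P} {q : P} (h : G.Indep (insert q A)) (hq : q ∉ A) :
    q ∉ G.span A := by
  simpa [Set.insert_sdiff_self_of_notMem hq] using h q (Set.mem_insert q A)

lemma Indep.insert {A : Set P} {q : P} (hA : G.Indep A) (hq : q ∉ G.span A) :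
    G.Indep (insert q A) := by
  have hqA : q ∉ A := fun h => hq (G.subset_span A h)
  rintro a (rfl | haA) hsp
  · rw [Set.insert_sdiff_self_of_notMem hqA] at hsp
    exact hq hsp
  · have haq : a ≠ q := fun h => hqA (h ▸ haA)
    rw [← Set.insert_sdiff_singleton_comm haq.symm] at hsp
    have hqA' : q ∉ G.span (A \ {a}) := fun h => hq (G.span_mono Set.sdiff_subset h)
    have := G.mem_span_insert_exchange hqA' hsp (hA a haA)
    rw [Set.insert_sdiff_singleton, Set.insert_eq_of_mem haA] at this
    exact hq this

end Indep

lemma bddAbove_card_indep (A : Finset P) :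
    BddAbove {n : ℕ | ∃ B : Finset P, ↑B ⊆ (↑A : Set P) ∧ G.Indep ↑B ∧ B.card = n} :=
  ⟨A.card, by
    rintro _ ⟨B, hBA, -, rfl⟩
    exact Finset.card_le_card (Finset.coe_subset.mp hBA)⟩

lemma card_le_rank_of_indep {A : Finset P} (hA : G.Indep ↑A) : A.card ≤ G.rank ↑A :=
  le_csSup (G.bddAbove_card_indep A) ⟨A, subset_rfl, hA, rfl⟩

lemma indep_of_rank_eq_card {A : Finset P} (h : G.rank ↑A = A.card) : G.Indep ↑A := by
  have hempty : G.Indep ↑(∅ : Finset P) := fun a ha => absurd ha (by simp)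
  have hrank : G.rank ↑A ∈
      {n : ℕ | ∃ B : Finset P, ↑B ⊆ (↑A : Set P) ∧ G.Indep ↑B ∧ B.card = n} :=
    Nat.sSup_mem ⟨0, ∅, by simp, hempty, rfl⟩ (G.bddAbove_card_indep A)
  obtain ⟨B, hBA, hB, hcard⟩ := hrank
  rwa [Finset.eq_of_subset_of_card_le (Finset.coe_subset.mp hBA) (hcard.trans h).ge] at hB

lemma span_insert_congr {A B : Set P} (h : G.span A = G.span B) (x : P) :
    G.span (insert x A) = G.span (insert x B) := by
  have key : ∀ {A B : Set P}, G.span A = G.span B →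
      G.span (insert x A) ⊆ G.span (insert x B) := fun h =>
    G.span_le (G.isFlat_span _) <| Set.insert_subset (G.mem_span_insert_self _ x) <|
      (G.subset_span _).trans (h ▸ G.span_mono (Set.subset_insert x _))
  exact (key h).antisymm (key h.symm)

lemma span_insert_eq_of_mem_line {A : Set P} {x y e : P} (hx : x ∈ G.line y e) (hxe : x ≠ e)
    (he : e ∈ G.span A) : G.span (insert x A) = G.span (insert y A) := by
  have key : ∀ {x y : P}, x ∈ G.line y e → G.span (insert x A) ⊆ G.span (insert y A) :=
    fun hx => G.span_le (G.isFlat_span _) <| Set.insert_subset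
      (G.line_subset_span (G.mem_span_insert_self A _)
        (G.span_mono (Set.subset_insert _ A) he) hx)
      ((G.subset_span A).trans (G.span_mono (Set.subset_insert _ A)))
  exact (key hx).antisymm (key (G.left_mem_line_of_mem hx hxe))

lemma indep_and_span_eq_of_mem_line {ι : Type*} {e : P} {φ ψ : ι → P} {D : Finset ι}
    (hinj : Set.InjOn φ ↑D) (hψ : ∀ i ∈ D, ψ i ∈ G.line (φ i) e ∧ ψ i ≠ e)
    (hind : G.Indep (insert e (φ '' ↑D))) :
    G.Indep (insert e (ψ '' ↑D)) ∧
      G.span (insert e (ψ '' ↑D)) = G.span (insert e (φ '' ↑D)) := by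
  classical
  induction D using Finset.induction_on with
  | empty => simpa using hind
  | insert i D hi ih =>
    rw [Finset.coe_insert] at hinj
    simp only [Finset.coe_insert, Set.image_insert_eq] at hind ⊢
    rw [Set.insert_comm e (φ i)] at hind ⊢
    rw [Set.insert_comm e (ψ i)]
    obtain ⟨ihind, ihspan⟩ := ih (hinj.mono (Set.subset_insert i _))
      (fun j hj => hψ j (Finset.mem_insert_of_mem hj)) (hind.mono (Set.subset_insert _ _))
    obtain ⟨hline, hne⟩ := hψ i (Finset.mem_insert_self i D)
    have hφe : φ i ≠ e := by
      rintro rfl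
      rw [G.line_self] at hline
      exact hne hline
    have hφD : φ i ∉ φ '' ↑D := fun ⟨j, hj, hji⟩ =>
      hi (hinj (Set.mem_insert_of_mem i hj) (Set.mem_insert i _) hji ▸ hj)
    have hφi : φ i ∉ G.span (insert e (φ '' ↑D)) :=
      hind.notMem_span (by simp [hφe, hφD])
    have hψi : ψ i ∉ G.span (insert e (ψ '' ↑D)) := fun h => hφi <| ihspan ▸
      G.mem_span_of_mem_line hline hne h (G.mem_span_insert_self _ e)
    refine ⟨ihind.insert hψi, ?_⟩
    rw [G.span_insert_eq_of_mem_line hline hne (G.mem_span_insert_self _ e),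
      G.span_insert_congr ihspan]

lemma existsUnique_mem_line_notMem_span_insert {X : Set P} {e z : P} (he : e ∉ G.span X)
    (hz : z ∈ G.span (insert e X)) (hze : z ≠ e) :
    ∃! a, a ∈ G.line z e ∧ e ∉ G.span (insert a X) := by
  rw [G.span_insert_eq_cone he] at hz
  obtain rfl | ⟨a, ha, hza⟩ := hz
  · exact absurd rfl hze
  have haz : a ∈ G.line z e := G.left_mem_line_of_mem hza hze
  refine ⟨a, ⟨haz, by rwa [G.span_insert_eq_of_mem ha]⟩, ?_⟩
  rintro y ⟨hy, hye⟩
  by_contra hya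
  have hline : G.line y a = G.line z e := G.line_unique z e y a hze hy haz hya
  exact hye (G.line_subset_span (G.mem_span_insert_self X y)
    (G.span_mono (Set.subset_insert y X) ha) (hline ▸ G.right_mem_line z e))

lemma existsUnique_mem_line_notMem_span_image {ι : Type*} {e z : P} {φ ψ : ι → P}
    {D : Finset ι} (hinj : Set.InjOn φ ↑D) (hψ : ∀ i ∈ D, ψ i ∈ G.line (φ i) e ∧ ψ i ≠ e)
    (hind : G.Indep (insert e (φ '' ↑D))) (hz : z ∈ G.span (φ '' ↑D)) (hze : z ≠ e) :
    ∃! a, a ∈ G.line z e ∧ e ∉ G.span (insert a (ψ '' ↑D)) := by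
  obtain ⟨hψind, hψspan⟩ := G.indep_and_span_eq_of_mem_line hinj hψ hind
  have he : e ∉ ψ '' ↑D := fun ⟨i, hi, hie⟩ => (hψ i hi).2 hie
  exact G.existsUnique_mem_line_notMem_span_insert (hψind.notMem_span he)
    (hψspan ▸ G.span_mono (Set.subset_insert e _) hz) hze

lemma indep_and_mem_span_of_isCircle {N E' : Type*} [Fintype N] {Δ : MGraph N E'}
    {z' : E' → P} (hz'inj : Function.Injective z')
    (hz'rep : ∀ S : Finset E', Δ.graphicRk (↑S : Set E') = G.rank (z' '' ↑S))
    {C : Finset E'} (hC : Δ.IsCircle C) {f₀ : E'} (hf₀ : f₀ ∈ C) :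
    G.Indep (z' '' ↑(C.erase f₀)) ∧ z' f₀ ∈ G.span (z' '' ↑(C.erase f₀)) := by
  have hrk : ∀ S : Finset E', G.rank ↑(S.image z') = Δ.graphicRk ↑S := fun S => by
    rw [Finset.coe_image, hz'rep]
  have hcard : ∀ S : Finset E', (S.image z').card = S.card := fun S =>
    Finset.card_image_of_injective S hz'inj
  have hrkC := Δ.graphicRk_of_isCircle hC
  have hind : G.Indep ↑((C.erase f₀).image z') := G.indep_of_rank_eq_card <| by
    rw [hrk, hcard, Δ.graphicRk_erase_of_isCircle hC hf₀, hrkC, Finset.card_erase_of_mem hf₀]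
  rw [← Finset.coe_image]
  refine ⟨hind, by_contra fun hspan => ?_⟩
  have hinsert : C.image z' = insert (z' f₀) ((C.erase f₀).image z') := by
    rw [← Finset.image_insert, Finset.insert_erase hf₀]
  have hle := G.card_le_rank_of_indep (A := C.image z') <| by
    rw [hinsert, Finset.coe_insert]
    exact hind.insert hspan
  rw [hrk, hcard, hrkC] at hle
  have := hC.1.card_pos
  omega

variable {N E' : Type*} {z' : E' → P} {e₀ : P} {Ehat : Set P}
  {hE : ∀ x ∈ Ehat, ∃ f : E', x ∈ G.line (z' f) e₀}

lemma mem_line_orthoProj (x : ↥Ehat) :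
    (x : P) ∈ G.line (z' (G.orthoProj z' e₀ Ehat hE x)) e₀ :=
  (hE x x.2).choose_spec

lemma orthoProj_eq_of_mem_line {P' : Set P} (hP' : G.IsFlat P') (he₀ : e₀ ∉ P')
    (hz'mem : ∀ f, z' f ∈ P') (hz'inj : Function.Injective z') (hEhat : ∀ x ∈ Ehat, x ≠ e₀)
    {x : ↥Ehat} {f : E'} (hx : (x : P) ∈ G.line (z' f) e₀) :
    G.orthoProj z' e₀ Ehat hE x = f :=
  hz'inj (G.eq_of_mem_line_of_mem_line hP' he₀ (hz'mem _) (hz'mem f) (hEhat x x.2)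
    (G.mem_line_orthoProj x) hx)

lemma existsUnique_mem_line_notMem_span_lift [Fintype N] {Δ : MGraph N E'} {P' : Set P}
    (hP' : G.IsFlat P') (he₀ : e₀ ∉ P') (hz'mem : ∀ f, z' f ∈ P')
    (hz'inj : Function.Injective z')
    (hz'rep : ∀ S : Finset E', Δ.graphicRk (↑S : Set E') = G.rank (z' '' ↑S))
    (hEhat : ∀ x ∈ Ehat, x ≠ e₀) {C : Finset E'} (hC : Δ.IsCircle C) {f₀ : E'} (hf₀ : f₀ ∈ C)
    {s : E' → ↥Ehat} (hs : ∀ f ∈ C.erase f₀, G.orthoProj z' e₀ Ehat hE (s f) = f) :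
    ∃! a, a ∈ G.line (z' f₀) e₀ ∧
      e₀ ∉ G.span (insert a ((fun f => (s f : P)) '' ↑(C.erase f₀))) := by
  obtain ⟨hind, hf₀span⟩ := G.indep_and_mem_span_of_isCircle hz'inj hz'rep hC hf₀
  have hlift : ∀ f ∈ C.erase f₀, (s f : P) ∈ G.line (z' f) e₀ ∧ (s f : P) ≠ e₀ := by
    intro f hf
    have hline := G.mem_line_orthoProj (hE := hE) (s f)
    rw [hs f hf] at hline
    exact ⟨hline, hEhat _ (s f).2⟩
  have he₀span : e₀ ∉ G.span (z' '' ↑(C.erase f₀)) := fun h =>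
    he₀ (G.span_le hP' (Set.image_subset_iff.mpr fun f _ => hz'mem f) h)
  exact G.existsUnique_mem_line_notMem_span_image hz'inj.injOn hlift (hind.insert he₀span)
    hf₀span fun h => he₀ (h ▸ hz'mem f₀)

end ProjGeom

lemma image_coe_image_union_singleton {α ι E : Type*} (g : E → α) (s : ι → E) (D : Finset ι)
    (t : E) : g '' ↑(D.image s ∪ {t}) = insert (g t) ((fun i => g (s i)) '' ↑D) := by
  rw [Finset.union_singleton, Finset.coe_insert, Finset.coe_image, Set.image_insert_eq,
    Set.image_image]

theorem stmt13_general {P N E' : Type*} [Fintype N] (G : ProjGeom P)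
    (P' : Set P) (hP' : G.IsHyperplane P')
    (Δ : MGraph N E')
    (z' : E' → P) (hz'mem : ∀ f : E', z' f ∈ P')
    (hz'inj : Function.Injective z')
    (hz'rep : ∀ S : Finset E', Δ.graphicRk (↑S : Set E') = G.rank (z' '' ↑S))
    (e₀ : P) (he₀ : e₀ ∉ P')
    (Ehat : Set P) (hEhat : Ehat = (⋃ f : E', G.line (z' f) e₀) \ {e₀})
    (hE : ∀ x ∈ Ehat, ∃ f : E', x ∈ G.line (z' f) e₀) :
    IsBiasedExpansion (G.orthoGraph Δ z' e₀ Ehat hE) (G.orthoBal Δ z' e₀ Ehat hE)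
      Δ (G.orthoProj z' e₀ Ehat hE) := by
  have hz'ne : ∀ f, z' f ≠ e₀ := fun f h => he₀ (h ▸ hz'mem f)
  have hEhat_ne : ∀ x ∈ Ehat, x ≠ e₀ := by
    rw [hEhat]
    exact fun x hx => hx.2
  have hmem : ∀ {x f}, x ∈ G.line (z' f) e₀ → x ≠ e₀ → x ∈ Ehat := by
    rw [hEhat]
    exact fun hx hxe => ⟨Set.mem_iUnion.mpr ⟨_, hx⟩, hxe⟩
  have hproj : ∀ {x : ↥Ehat} {f}, (x : P) ∈ G.line (z' f) e₀ →
      G.orthoProj z' e₀ Ehat hE x = f :=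
    G.orthoProj_eq_of_mem_line hP'.1 he₀ hz'mem hz'inj hEhat_ne
  refine ⟨fun f => ⟨⟨z' f, hmem (G.left_mem_line _ _) (hz'ne f)⟩,
    hproj (G.left_mem_line _ _)⟩, fun _ => rfl, ?_⟩
  intro C hC f₀ hf₀ s hs
  obtain ⟨a, ⟨haL, haX⟩, huniq⟩ := G.existsUnique_mem_line_notMem_span_lift hP'.1 he₀ hz'mem
    hz'inj hz'rep hEhat_ne hC hf₀ hs
  have hae : a ≠ e₀ := fun h => haX (h ▸ G.mem_span_insert_self _ _)
  have hpa : G.orthoProj z' e₀ Ehat hE ⟨a, hmem haL hae⟩ = f₀ := hproj haL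
  refine ⟨⟨a, hmem haL hae⟩, ⟨hpa, ?_, ?_⟩, ?_⟩
  · exact Δ.isCircle_image_erase_union (G₂ := G.orthoGraph Δ z' e₀ Ehat hE) (fun _ => rfl)
      hC hf₀ hs hpa
  · rw [image_coe_image_union_singleton]
    exact haX
  · rintro t ⟨hpt, -, ht⟩
    rw [image_coe_image_union_singleton] at ht
    exact Subtype.ext (huniq t ⟨hpt ▸ G.mem_line_orthoProj t, ht⟩)

/-- In the orthographic construction with `Ehat` equal to all of
`Ê(Δ, ê₀)∖{ê₀}`, the biased graph `Ω₀(Ehat)` is a biased expansion of `Δ`, the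
projection sending each edge `ê` to the edge of `Δ` whose edge line contains it. -/
theorem stmt13 {P N E' : Type*} [Fintype N] [Nonempty N] (G : ProjGeom P)
    (P' : Set P) (hP' : G.IsHyperplane P')
    (Δ : MGraph N E') (hΔ : Δ.IsSimple)
    (z' : E' → P) (hz'mem : ∀ f : E', z' f ∈ P')
    (hz'inj : Function.Injective z')
    (hz'rep : ∀ S : Finset E', Δ.graphicRk (↑S : Set E') = G.rank (z' '' ↑S))
    (e₀ : P) (he₀ : e₀ ∉ P')
    (Ehat : Set P) (hEhat : Ehat = (⋃ f : E', G.line (z' f) e₀) \ {e₀})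
    (hE : ∀ x ∈ Ehat, ∃ f : E', x ∈ G.line (z' f) e₀) :
    IsBiasedExpansion (G.orthoGraph Δ z' e₀ Ehat hE) (G.orthoBal Δ z' e₀ Ehat hE)
      Δ (G.orthoProj z' e₀ Ehat hE) :=
  stmt13_general G P' hP' Δ z' hz'mem hz'inj hz'rep e₀ he₀ Ehat hEhat hE
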